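/- arXiv:1203.2557 — 4 statements merged into one kernel-verified Lean document; each statement's English description precedes it below -/
import Mathlib

section
/- Fix a constant γ with 0 < γ ≤ 1/2, and consider a sequence of majority-vote models indexed by n, where the n-th model votes n conditionally independent features of which k(n) are relevant (agree with the label with probability 1/2 + γ) and ℓ(n) are misleading (agree with probability 1/2 − γ), the rest being irrelevant (agree with probability 1/2). If k(n) − ℓ(n) = ω(√n) and k(n) = o(n) as n → ∞, then the error probability of the n-th model (the probability that at most half its features agree with the label) tends to 0, while the fraction (n − k(n) − ℓ(n))/n of irrelevant features in the model tends to 1. -/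
/-!
Each feature is a Bernoulli variable, so the vote count `S` has mean `n / 2 + γ (k - ℓ)` and, by
independence and Popoviciu's inequality, variance at most `n / 4`. An error requires `S` to fall
`γ (k - ℓ)` below its mean, so Chebyshev bounds the error probability by `n / (4 γ² (k - ℓ)²)`,
which tends to `0` exactly because `k - ℓ = ω(√n)`. The irrelevant fraction tends to `1` because
eventually `ℓ ≤ k = o(n)`.
-/

open MeasureTheory ProbabilityTheory Filter Finset

section Bernoulli

variable {Ω : Type*} [MeasurableSpace Ω] {μ : Measure Ω} {X : Ω → ℝ}

lemma ae_mem_Icc_of_eq_zero_or_eq_one (h01 : ∀ ω, X ω = 0 ∨ X ω = 1) :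
    ∀ᵐ ω ∂μ, X ω ∈ Set.Icc (0 : ℝ) 1 :=
  .of_forall fun ω => by rcases h01 ω with h | h <;> simp [h]

lemma memLp_of_eq_zero_or_eq_one [IsFiniteMeasure μ] (hX : Measurable X)
    (h01 : ∀ ω, X ω = 0 ∨ X ω = 1) (p : ENNReal) : MemLp X p μ :=
  memLp_of_bounded (ae_mem_Icc_of_eq_zero_or_eq_one h01) hX.aestronglyMeasurable p

lemma integral_eq_toReal_measure_of_eq_zero_or_eq_one (hX : Measurable X)
    (h01 : ∀ ω, X ω = 0 ∨ X ω = 1) : μ[X] = (μ {ω | X ω = 1}).toReal := by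
  have hs : MeasurableSet {ω | X ω = 1} := hX (measurableSet_singleton 1)
  have hX_eq : X = Set.indicator {ω | X ω = 1} 1 := by
    funext ω
    rcases h01 ω with h | h <;> simp [h]
  conv_lhs => rw [hX_eq]
  rw [integral_indicator_one hs, measureReal_def]

lemma variance_le_one_div_four_of_eq_zero_or_eq_one [IsProbabilityMeasure μ] (hX : Measurable X)
    (h01 : ∀ ω, X ω = 0 ∨ X ω = 1) : variance X μ ≤ 1 / 4 :=
  (variance_le_sq_of_bounded (ae_mem_Icc_of_eq_zero_or_eq_one h01) hX.aemeasurable).trans_eq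
    (by norm_num)

end Bernoulli

lemma measure_le_integral_sub_le_variance_div_sq {Ω : Type*} [MeasurableSpace Ω] {μ : Measure Ω}
    [IsFiniteMeasure μ] {X : Ω → ℝ} (hX : MemLp X 2 μ) {c : ℝ} (hc : 0 < c) :
    μ {ω | X ω ≤ μ[X] - c} ≤ ENNReal.ofReal (variance X μ / c ^ 2) := by
  refine (measure_mono fun ω hω => ?_).trans (meas_ge_le_variance_div_sq hX hc)
  simp only [Set.mem_ofPred_eq] at hω ⊢
  rw [abs_sub_comm]
  exact le_abs.mpr (.inl (by linarith))

lemma sum_eq_card_div_two_add_mul_sub {ι : Type*} [Fintype ι] {p : ι → ℝ}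
    {γ : ℝ} {Rel Mis : Finset ι} (hdisj : Disjoint Rel Mis)
    (hrel : ∀ i ∈ Rel, p i = 1 / 2 + γ) (hmis : ∀ i ∈ Mis, p i = 1 / 2 - γ)
    (hirr : ∀ i, i ∉ Rel → i ∉ Mis → p i = 1 / 2) :
    ∑ i, p i = Fintype.card ι / 2 + γ * (#Rel - #Mis) := by
  classical
  have hbias : ∑ i, (p i - 1 / 2) = ∑ i ∈ Rel ∪ Mis, (p i - 1 / 2) := by
    refine (sum_subset (subset_univ _) fun i _ hi => ?_).symm
    rw [mem_union, not_or] at hi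
    rw [hirr i hi.1 hi.2, sub_self]
  have hRel : ∑ i ∈ Rel, (p i - 1 / 2) = #Rel * γ := by
    rw [sum_congr rfl fun i hi => by rw [hrel i hi, add_sub_cancel_left], sum_const, nsmul_eq_mul]
  have hMis : ∑ i ∈ Mis, (p i - 1 / 2) = #Mis * -γ := by
    rw [sum_congr rfl fun i hi => by rw [hmis i hi, sub_sub_cancel_left], sum_const,
      nsmul_eq_mul]
  rw [sum_union hdisj, hRel, hMis, sum_sub_distrib, sum_const, card_univ, nsmul_eq_mul] at hbias
  linarith

section MajorityVote

variable {Ω ι : Type*} [MeasurableSpace Ω] {μ : Measure Ω} [IsProbabilityMeasure μ]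
  [Fintype ι] {V : ι → Ω → ℝ} {γ : ℝ} {Rel Mis : Finset ι}

lemma integral_sum_votes_eq (hγ : |γ| ≤ 1 / 2) (hdisj : Disjoint Rel Mis)
    (hmeas : ∀ i, Measurable (V i)) (h01 : ∀ i ω, V i ω = 0 ∨ V i ω = 1)
    (hrel : ∀ i ∈ Rel, μ {ω | V i ω = 1} = ENNReal.ofReal (1 / 2 + γ))
    (hmis : ∀ i ∈ Mis, μ {ω | V i ω = 1} = ENNReal.ofReal (1 / 2 - γ))
    (hirr : ∀ i, i ∉ Rel → i ∉ Mis → μ {ω | V i ω = 1} = ENNReal.ofReal (1 / 2)) :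
    μ[fun ω => ∑ i, V i ω] = Fintype.card ι / 2 + γ * (#Rel - #Mis) := by
  obtain ⟨hγ_lower, hγ_upper⟩ := abs_le.mp hγ
  have hint : ∀ i, Integrable (V i) μ := fun i =>
    memLp_one_iff_integrable.mp (memLp_of_eq_zero_or_eq_one (hmeas i) (h01 i) 1)
  have hmean : ∀ i, μ[V i] = (μ {ω | V i ω = 1}).toReal := fun i =>
    integral_eq_toReal_measure_of_eq_zero_or_eq_one (hmeas i) (h01 i)
  rw [integral_finsetSum _ fun i _ => hint i]
  refine sum_eq_card_div_two_add_mul_sub hdisj (fun i hi => ?_) (fun i hi => ?_) (fun i hr hm => ?_)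
  · rw [hmean, hrel i hi, ENNReal.toReal_ofReal (by linarith)]
  · rw [hmean, hmis i hi, ENNReal.toReal_ofReal (by linarith)]
  · rw [hmean, hirr i hr hm, ENNReal.toReal_ofReal (by norm_num)]

lemma variance_sum_votes_le (hmeas : ∀ i, Measurable (V i)) (hindep : iIndepFun V μ)
    (h01 : ∀ i ω, V i ω = 0 ∨ V i ω = 1) :
    variance (fun ω => ∑ i, V i ω) μ ≤ Fintype.card ι / 4 := by
  have hsum : (fun ω => ∑ i, V i ω) = ∑ i, V i := by
    funext ω
    rw [Finset.sum_apply]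
  rw [hsum, IndepFun.variance_sum (fun i _ => memLp_of_eq_zero_or_eq_one (hmeas i) (h01 i) 2)
    fun i _ j _ hij => hindep.indepFun hij]
  calc ∑ i, variance (V i) μ ≤ ∑ _i : ι, (1 / 4 : ℝ) :=
        sum_le_sum fun i _ => variance_le_one_div_four_of_eq_zero_or_eq_one (hmeas i) (h01 i)
    _ = Fintype.card ι / 4 := by simp [div_eq_mul_inv]

lemma measure_sum_votes_le_half_le (hγ : |γ| ≤ 1 / 2) (hdisj : Disjoint Rel Mis)
    (hmeas : ∀ i, Measurable (V i)) (hindep : iIndepFun V μ) (h01 : ∀ i ω, V i ω = 0 ∨ V i ω = 1)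
    (hrel : ∀ i ∈ Rel, μ {ω | V i ω = 1} = ENNReal.ofReal (1 / 2 + γ))
    (hmis : ∀ i ∈ Mis, μ {ω | V i ω = 1} = ENNReal.ofReal (1 / 2 - γ))
    (hirr : ∀ i, i ∉ Rel → i ∉ Mis → μ {ω | V i ω = 1} = ENNReal.ofReal (1 / 2))
    (hmargin : 0 < γ * (#Rel - #Mis)) :
    (μ {ω | ∑ i, V i ω ≤ Fintype.card ι / 2}).toReal ≤
      Fintype.card ι / 4 / (γ * (#Rel - #Mis)) ^ 2 := by
  have hS : MemLp (fun ω => ∑ i, V i ω) 2 μ :=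
    memLp_finsetSum _ fun i _ => memLp_of_eq_zero_or_eq_one (hmeas i) (h01 i) 2
  have hmean := integral_sum_votes_eq hγ hdisj hmeas h01 hrel hmis hirr
  have hevent : {ω | ∑ i, V i ω ≤ Fintype.card ι / 2} =
      {ω | ∑ i, V i ω ≤ μ[fun ω => ∑ i, V i ω] - γ * (#Rel - #Mis)} := by
    rw [hmean, add_sub_cancel_right]
  rw [hevent]
  calc _ ≤ variance (fun ω => ∑ i, V i ω) μ / (γ * (#Rel - #Mis)) ^ 2 :=
        ENNReal.toReal_le_of_le_ofReal (div_nonneg (variance_nonneg _ _) (sq_nonneg _))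
          (measure_le_integral_sub_le_variance_div_sq hS hmargin)
    _ ≤ _ := by gcongr; exact variance_sum_votes_le hmeas hindep h01

end MajorityVote

lemma tendsto_natCast_div_sq_of_tendsto_div_sqrt {a : ℕ → ℝ}
    (h : Tendsto (fun n => a n / Real.sqrt n) atTop atTop) :
    Tendsto (fun n : ℕ => (n : ℝ) / a n ^ 2) atTop (nhds 0) := by
  have h_inv_sq := h.inv_tendsto_atTop.pow 2
  rw [zero_pow two_ne_zero] at h_inv_sq
  refine h_inv_sq.congr fun n => ?_
  rw [Pi.inv_apply, inv_div, div_pow, Real.sq_sqrt n.cast_nonneg]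

lemma tendsto_sub_sub_div_self_of_isLittleO {k ℓ : ℕ → ℝ} (hk : k =o[atTop] (fun n => (n : ℝ)))
    (hℓ : ℓ =o[atTop] (fun n => (n : ℝ))) :
    Tendsto (fun n : ℕ => ((n : ℝ) - k n - ℓ n) / n) atTop (nhds 1) := by
  have h := (tendsto_const_nhds (x := (1 : ℝ))).sub hk.tendsto_div_nhds_zero
    |>.sub hℓ.tendsto_div_nhds_zero
  rw [sub_zero, sub_zero] at h
  refine h.congr' ?_
  filter_upwards [eventually_ne_atTop 0] with n hn
  field_simp

/-- **Corollary 2.** Fix `0 < γ ≤ 1/2` and consider a sequence of majority-vote models, the `n`-th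
voting `n` conditionally independent features of which `k n` are relevant (agreement probability
`1/2 + γ`), `ℓ n` are misleading (agreement probability `1/2 − γ`) and the rest irrelevant
(agreement probability `1/2`). If `k n − ℓ n = ω(√n)` and `k n = o(n)`, then the error probability
of the `n`-th model (the probability that at most half its features agree with the label) tends
to `0`, while the fraction of irrelevant features tends to `1`. -/
theorem mostly_irrelevant_but_accurate
    (γ : ℝ) (hγ0 : 0 < γ) (hγ : γ ≤ 1 / 2)
    (Ω : ℕ → Type*) (mΩ : ∀ n, MeasurableSpace (Ω n)) (μ : ∀ n, Measure (Ω n))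
    (hprob : ∀ n, IsProbabilityMeasure (μ n))
    (k ℓ : ℕ → ℕ)
    (Rel Mis : ∀ n, Finset (Fin n)) (hdisj : ∀ n, Disjoint (Rel n) (Mis n))
    (hk : ∀ n, (Rel n).card = k n) (hl : ∀ n, (Mis n).card = ℓ n)
    (V : ∀ n, Fin n → Ω n → ℝ)
    (hmeas : ∀ n i, Measurable (V n i))
    (hindep : ∀ n, iIndepFun (V n) (μ n))
    (h01 : ∀ n i ω, V n i ω = 0 ∨ V n i ω = 1)
    (hrel : ∀ n, ∀ i ∈ Rel n, μ n {ω | V n i ω = 1} = ENNReal.ofReal (1 / 2 + γ))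
    (hmis : ∀ n, ∀ i ∈ Mis n, μ n {ω | V n i ω = 1} = ENNReal.ofReal (1 / 2 - γ))
    (hirr : ∀ n, ∀ i : Fin n, i ∉ Rel n → i ∉ Mis n →
      μ n {ω | V n i ω = 1} = ENNReal.ofReal (1 / 2))
    (homega : Tendsto (fun n => ((k n : ℝ) - ℓ n) / Real.sqrt n) atTop atTop)
    (hlittleo : (fun n => (k n : ℝ)) =o[atTop] (fun n => (n : ℝ))) :
    Tendsto (fun n => (μ n {ω | (∑ i, V n i ω) ≤ n / 2}).toReal) atTop (nhds 0) ∧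
    Tendsto (fun n : ℕ => ((n : ℝ) - k n - ℓ n) / n) atTop (nhds 1) := by
  have hγ_abs : |γ| ≤ 1 / 2 := abs_le.mpr ⟨by linarith, hγ⟩
  have hgap : ∀ᶠ n in atTop, 0 < (k n : ℝ) - ℓ n :=
    (homega.eventually_gt_atTop 0).mono fun n h =>
      lt_of_not_ge fun h' => (div_nonpos_of_nonpos_of_nonneg h' (Real.sqrt_nonneg _)).not_gt h
  have hbound : ∀ᶠ n in atTop, (μ n {ω | (∑ i, V n i ω) ≤ n / 2}).toReal ≤
      1 / (4 * γ ^ 2) * ((n : ℝ) / ((k n : ℝ) - ℓ n) ^ 2) := hgap.mono fun n hn => by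
    have := measure_sum_votes_le_half_le (μ := μ n) hγ_abs (hdisj n) (hmeas n) (hindep n) (h01 n)
      (hrel n) (hmis n) (hirr n) (by rw [hk, hl]; positivity)
    rw [hk, hl, Fintype.card_fin] at this
    exact this.trans_eq (by field_simp)
  refine ⟨?_, tendsto_sub_sub_div_self_of_isLittleO hlittleo ?_⟩
  · have hlim := (tendsto_natCast_div_sq_of_tendsto_div_sqrt homega).const_mul (1 / (4 * γ ^ 2))
    rw [mul_zero] at hlim
    exact tendsto_of_tendsto_of_tendsto_of_le_of_le' tendsto_const_nhds hlim
      (.of_forall fun n => ENNReal.toReal_nonneg) hbound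
  · refine (Asymptotics.IsBigO.of_norm_eventuallyLE ?_).trans_isLittleO hlittleo
    filter_upwards [hgap] with n hn
    rw [Real.norm_natCast]
    linarith
end

section
/- In the learning model with parameters N, K, γ, m, let 0 ≤ β ≤ γ and 0 < δ ≤ 1. With probability at least 1 − δ over the random draw of the m training examples, the number of misleading features included in M_β (misleading features that agree with the class label on at least a 1/2 + β fraction of the m training examples) is at most 4·K·exp(−2·(γ+β)²·m) + 3·ln(1/δ). -/
/-!
For a misleading feature `j`, the agreement count `∑ t, W (j, t)` is a sum of `m` independent
Bernoulli(1/2 − γ) variables, so by Hoeffding's inequality the event `A j` that it reaches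
`(1/2 + β) m` has probability at most `q = exp (−2 (γ + β)² m)`. The events `A j` depend on
disjoint blocks of the family `W`, hence are independent, and the Chernoff bound for their count
`C` at the exponent `log 2` gives `P(C ≥ a) ≤ exp (K q − a log 2)`, which is at most `δ` for
`a = 4 K q + 3 log (1/δ)` since `log 2 > 1/3`.
-/

open MeasureTheory ProbabilityTheory Real

lemma exp_sub_mul_log_two_le {x δ : ℝ} (hx : 0 ≤ x) (hδ0 : 0 < δ) (hδ1 : δ ≤ 1) :
    exp (x - (4 * x + 3 * log (1 / δ)) * log 2) ≤ δ := by
  have hL : 0 ≤ log (1 / δ) := log_nonneg (by rw [le_div_iff₀ hδ0]; linarith)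
  have hlog2 : 1 / 3 < log 2 := by linarith [log_two_gt_d9]
  calc exp (x - (4 * x + 3 * log (1 / δ)) * log 2) ≤ exp (-log (1 / δ)) := by
        gcongr
        nlinarith
    _ = δ := by rw [one_div, log_inv, neg_neg, exp_log hδ0]

namespace ProbabilityTheory

variable {Ω : Type*} [MeasurableSpace Ω] {μ : Measure Ω}

lemma iIndepFun.curry {ι κ 𝓧 : Type*} [MeasurableSpace 𝓧] {X : ι × κ → Ω → 𝓧}
    (hX : ∀ p, Measurable (X p)) (h : iIndepFun X μ) :
    iIndepFun (fun i ω j ↦ X (i, j) ω) μ := by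
  have := h.isProbabilityMeasure
  have : ∀ p, IsProbabilityMeasure (μ.map (X p)) :=
    fun p ↦ Measure.isProbabilityMeasure_map (hX p).aemeasurable
  rw [iIndepFun_iff_map_fun_eq_infinitePi_map fun i ↦ measurable_pi_lambda _ fun j ↦ hX (i, j)]
  have hrow : ∀ i, μ.map (fun ω j ↦ X (i, j) ω) = Measure.infinitePi fun j ↦ μ.map (X (i, j)) :=
    fun i ↦ (h.precomp (Prod.mk_right_injective i)).map_fun_eq_infinitePi_map fun j ↦ hX (i, j)
  simp_rw [hrow]
  rw [← Measure.infinitePi_map_curry (fun i j ↦ μ.map (X (i, j))),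
    ← h.map_fun_eq_infinitePi_map hX, Measure.map_map (by fun_prop) (measurable_pi_lambda _ hX)]
  rfl

lemma measureReal_sum_ge_le_of_mem_Icc_zero_one [IsProbabilityMeasure μ] {ι : Type*} [Fintype ι]
    {X : ι → Ω → ℝ} (hX : ∀ i, Measurable (X i)) (h_indep : iIndepFun X μ)
    (h01 : ∀ i ω, X i ω ∈ Set.Icc 0 1) {ε : ℝ} (hε : 0 ≤ ε) :
    μ.real {ω | ∑ i, μ[X i] + ε ≤ ∑ i, X i ω} ≤ exp (-2 * ε ^ 2 / Fintype.card ι) := by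
  have h_subG : ∀ i ∈ Finset.univ,
      HasSubgaussianMGF (fun ω ↦ X i ω - μ[X i]) ((‖(1 : ℝ) - 0‖₊ / 2) ^ 2) μ :=
    fun i _ ↦ hasSubgaussianMGF_of_mem_Icc (hX i).aemeasurable (ae_of_all _ (h01 i))
  have h_indep' : iIndepFun (fun i ω ↦ X i ω - μ[X i]) μ :=
    h_indep.comp (fun i x ↦ x - ∫ ω, X i ω ∂μ) fun _ ↦ measurable_id.sub_const _
  have key := HasSubgaussianMGF.measure_sum_ge_le_of_iIndepFun h_indep' h_subG hε
  convert key using 2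
  · ext ω
    simp only [Finset.sum_sub_distrib, Set.mem_ofPred_eq]
    constructor <;> intro h <;> linarith
  · simp only [sub_zero, nnnorm_one, one_div, inv_pow, Finset.sum_const, Finset.card_univ,
      nsmul_eq_mul, NNReal.coe_mul, NNReal.coe_natCast, NNReal.coe_inv, NNReal.coe_pow,
      NNReal.coe_ofNat]
    ring

lemma integral_eq_measureReal_of_zero_or_one {Y : Ω → ℝ} (hY : Measurable Y)
    (h01 : ∀ ω, Y ω = 0 ∨ Y ω = 1) : μ[Y] = μ.real {ω | Y ω = 1} := by
  have hY_eq : Y = {ω | Y ω = 1}.indicator 1 := by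
    ext ω
    rcases h01 ω with h | h <;> simp [Set.indicator, h]
  calc μ[Y] = ∫ ω, {ω | Y ω = 1}.indicator 1 ω ∂μ := by rw [← hY_eq]
    _ = μ.real {ω | Y ω = 1} := integral_indicator_one (hY (measurableSet_singleton 1))

lemma measureReal_sum_ge_le_of_zero_or_one [IsProbabilityMeasure μ] {ι : Type*} [Fintype ι]
    {X : ι → Ω → ℝ} (hX : ∀ i, Measurable (X i)) (h_indep : iIndepFun X μ)
    (h01 : ∀ i ω, X i ω = 0 ∨ X i ω = 1) {p ε : ℝ} (hp : ∀ i, μ.real {ω | X i ω = 1} = p)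
    (hε : 0 ≤ ε) :
    μ.real {ω | (p + ε) * Fintype.card ι ≤ ∑ i, X i ω} ≤ exp (-2 * ε ^ 2 * Fintype.card ι) := by
  have hmean : ∀ i, μ[X i] = p := fun i ↦
    (integral_eq_measureReal_of_zero_or_one (hX i) (h01 i)).trans (hp i)
  have hIcc : ∀ i ω, X i ω ∈ Set.Icc (0 : ℝ) 1 := fun i ω ↦ by
    rcases h01 i ω with h | h <;> simp [h]
  have key := measureReal_sum_ge_le_of_mem_Icc_zero_one hX h_indep hIcc
    (mul_nonneg hε (Nat.cast_nonneg (Fintype.card ι)))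
  simp only [hmean, Finset.sum_const, Finset.card_univ, nsmul_eq_mul] at key
  convert key using 4
  · rw [add_mul, mul_comm p]
  · rcases (Fintype.card ι).eq_zero_or_pos with h | h
    · simp [h]
    · field_simp

lemma mgf_log_two_le_exp_integral [IsProbabilityMeasure μ] {Y : Ω → ℝ} (hY : Measurable Y)
    (h01 : ∀ ω, Y ω ∈ Set.Icc 0 1) : mgf Y μ (log 2) ≤ exp μ[Y] := by
  have hY_int : Integrable Y μ := Integrable.of_mem_Icc 0 1 hY.aemeasurable (ae_of_all _ h01)
  -- `2 ^ y ≤ 1 + y` for `y ∈ [0, 1]`: Bernoulli's inequality with exponent at most one.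
  have h_pt : ∀ ω, exp (log 2 * Y ω) ≤ 1 + Y ω := fun ω ↦ by
    rw [← rpow_def_of_pos two_pos]
    have := rpow_one_add_le_one_add_mul_self (s := 1) (by norm_num) (h01 ω).1 (h01 ω).2
    rwa [one_add_one_eq_two, mul_one] at this
  calc mgf Y μ (log 2) ≤ ∫ ω, (1 + Y ω) ∂μ :=
        integral_mono (integrable_exp_mul_of_mem_Icc hY.aemeasurable (ae_of_all _ h01))
          ((integrable_const 1).add hY_int) h_pt
    _ = 1 + μ[Y] := by rw [integral_add (integrable_const 1) hY_int]; simp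
    _ ≤ exp μ[Y] := by linarith [add_one_le_exp μ[Y]]

lemma measureReal_le_sum_le_exp [IsProbabilityMeasure μ] {ι : Type*} [Fintype ι]
    {Y : ι → Ω → ℝ} (hY : ∀ i, Measurable (Y i)) (h_indep : iIndepFun Y μ)
    (h01 : ∀ i ω, Y i ω ∈ Set.Icc 0 1) (a : ℝ) :
    μ.real {ω | a ≤ ∑ i, Y i ω} ≤ exp (∑ i, μ[Y i] - a * log 2) := by
  have h_int : Integrable (fun ω ↦ exp (log 2 * (∑ i, Y i) ω)) μ :=
    h_indep.integrable_exp_mul_sum hY fun i _ ↦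
      integrable_exp_mul_of_mem_Icc (hY i).aemeasurable (ae_of_all _ (h01 i))
  calc μ.real {ω | a ≤ ∑ i, Y i ω} = μ.real {ω | a ≤ (∑ i, Y i) ω} := by simp
    _ ≤ exp (-log 2 * a) * mgf (∑ i, Y i) μ (log 2) :=
        measure_ge_le_exp_mul_mgf a (log_nonneg one_le_two) h_int
    _ = exp (-log 2 * a) * ∏ i, mgf (Y i) μ (log 2) := by rw [h_indep.mgf_sum hY]
    _ ≤ exp (-log 2 * a) * ∏ i, exp μ[Y i] := by
        gcongr with i
        · exact fun i _ ↦ mgf_nonneg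
        · exact mgf_log_two_le_exp_integral (hY i) (h01 i)
    _ = exp (∑ i, μ[Y i] - a * log 2) := by
        rw [← exp_sum, ← exp_add]
        ring_nf

lemma measureReal_sum_indicator_ge_le [IsProbabilityMeasure μ] {ι : Type*} [Fintype ι]
    {A : ι → Set Ω} (hA : ∀ i, MeasurableSet (A i))
    (h_indep : iIndepFun (fun i ↦ (A i).indicator (1 : Ω → ℝ)) μ) {δ : ℝ} (hδ0 : 0 < δ)
    (hδ1 : δ ≤ 1) :
    μ.real {ω | 4 * ∑ i, μ.real (A i) + 3 * log (1 / δ) ≤ ∑ i, (A i).indicator 1 ω} ≤ δ := by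
  have h01 : ∀ i ω, (A i).indicator (1 : Ω → ℝ) ω ∈ Set.Icc 0 1 := fun i ω ↦ by
    by_cases h : ω ∈ A i <;> simp [h]
  have key := measureReal_le_sum_le_exp (fun i ↦ measurable_one.indicator (hA i)) h_indep h01
    (4 * ∑ i, μ.real (A i) + 3 * log (1 / δ))
  simp only [integral_indicator_one (hA _)] at key
  exact key.trans (exp_sub_mul_log_two_le (Finset.sum_nonneg fun i _ ↦ measureReal_nonneg) hδ0 hδ1)

lemma ofReal_one_sub_le_of_measureReal_compl_le [IsProbabilityMeasure μ] {s : Set Ω} {δ : ℝ}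
    (h : μ.real sᶜ ≤ δ) : ENNReal.ofReal (1 - δ) ≤ μ s := by
  have h_union : μ.real Set.univ ≤ μ.real s + μ.real sᶜ := by
    rw [← Set.union_compl_self s]
    exact measureReal_union_le s sᶜ
  rw [← ofReal_measureReal]
  gcongr
  simp only [probReal_univ] at h_union
  linarith

end ProbabilityTheory

/-- `W (j, t)` is the indicator that the `j`-th misleading feature agrees with the class label on
the `t`-th training example. -/
theorem few_misleading_features_general
    {Ω : Type*} [MeasurableSpace Ω] (μ : Measure Ω) [IsProbabilityMeasure μ]
    (K m : ℕ) (γ β δ : ℝ)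
    (hβ0 : 0 ≤ β) (hβγ : β ≤ γ) (hγ : γ ≤ 1 / 2) (hδ0 : 0 < δ) (hδ1 : δ ≤ 1)
    (W : Fin K × Fin m → Ω → ℝ)
    (hmeas : ∀ p, Measurable (W p))
    (hindep : iIndepFun W μ)
    (h01 : ∀ p ω, W p ω = 0 ∨ W p ω = 1)
    (hp : ∀ p, μ {ω | W p ω = 1} = ENNReal.ofReal (1 / 2 - γ)) :
    ENNReal.ofReal (1 - δ) ≤
      μ {ω | ((Finset.univ.filter (fun j : Fin K =>
            (1 / 2 + β) * m ≤ ∑ t : Fin m, W (j, t) ω)).card : ℝ)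
          ≤ 4 * K * Real.exp (-2 * (γ + β) ^ 2 * m) + 3 * Real.log (1 / δ)} := by
  set q := exp (-2 * (γ + β) ^ 2 * m)
  set B := {v : Fin m → ℝ | (1 / 2 + β) * m ≤ ∑ t, v t}
  let A : Fin K → Set Ω := fun j ↦ (fun ω t ↦ W (j, t) ω) ⁻¹' B
  have hB : MeasurableSet B :=
    measurableSet_le measurable_const (Finset.measurable_sum _ fun t _ ↦ measurable_pi_apply t)
  have hA_meas : ∀ j, MeasurableSet (A j) := fun j ↦
    measurable_pi_lambda _ (fun t ↦ hmeas (j, t)) hB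
  have hA : ∀ j, μ.real (A j) ≤ q := fun j ↦ by
    have key := measureReal_sum_ge_le_of_zero_or_one (fun t ↦ hmeas (j, t))
      (hindep.precomp (Prod.mk_right_injective j)) (fun t ↦ h01 (j, t))
      (fun t ↦ by rw [measureReal_def, hp, ENNReal.toReal_ofReal (by linarith)])
      (by linarith : 0 ≤ γ + β)
    rwa [Fintype.card_fin, show 1 / 2 - γ + (γ + β) = 1 / 2 + β by ring] at key
  have hA_indep : iIndepFun (fun j ↦ (A j).indicator (1 : Ω → ℝ)) μ :=
    (hindep.curry hmeas).comp (fun _ ↦ B.indicator 1) fun _ ↦ measurable_one.indicator hB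
  apply ofReal_one_sub_le_of_measureReal_compl_le
  refine (measureReal_mono fun ω hω ↦ ?_).trans
    (measureReal_sum_indicator_ge_le hA_meas hA_indep hδ0 hδ1)
  have hsum : ∑ j, μ.real (A j) ≤ K * q := by
    simpa using Finset.sum_le_sum fun j (_ : j ∈ Finset.univ) ↦ hA j
  have hcount : ∑ j, (A j).indicator 1 ω = ((Finset.univ.filter fun j : Fin K ↦
      (1 / 2 + β) * m ≤ ∑ t, W (j, t) ω).card : ℝ) := by
    simp [Set.indicator_apply, A, B]
  simp only [Set.mem_compl_iff, Set.mem_ofPred_eq, not_le] at hω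
  rw [Set.mem_ofPred_eq, hcount]
  linarith

/-- **Lemma 3 (few misleading features).** In the learning model with parameters `N, K, γ, m`,
let `W (j, t)` be the indicator that the `j`-th misleading feature agrees with the class label on
the `t`-th training example; these `K·m` indicators are jointly independent, each equal to `1`
with probability `1/2 − γ`. For `0 ≤ β ≤ γ` and `0 < δ ≤ 1`, with probability at least `1 − δ`
the number of misleading features included in `M_β` (those agreeing with the label on at least a
`1/2 + β` fraction of the `m` training examples) is at most
`4·K·exp(−2·(γ+β)²·m) + 3·ln(1/δ)`. -/
theorem few_misleading_features
    {Ω : Type*} [MeasurableSpace Ω] (μ : Measure Ω) [IsProbabilityMeasure μ]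
    (N K m : ℕ) (hKN : K ≤ N) (γ β δ : ℝ)
    (hβ0 : 0 ≤ β) (hβγ : β ≤ γ) (hγ : γ ≤ 1 / 2) (hδ0 : 0 < δ) (hδ1 : δ ≤ 1)
    (W : Fin K × Fin m → Ω → ℝ)
    (hmeas : ∀ p, Measurable (W p))
    (hindep : iIndepFun W μ)
    (h01 : ∀ p ω, W p ω = 0 ∨ W p ω = 1)
    (hp : ∀ p, μ {ω | W p ω = 1} = ENNReal.ofReal (1 / 2 - γ)) :
    ENNReal.ofReal (1 - δ) ≤
      μ {ω | ((Finset.univ.filter (fun j : Fin K =>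
            (1 / 2 + β) * m ≤ ∑ t : Fin m, W (j, t) ω)).card : ℝ)
          ≤ 4 * K * Real.exp (-2 * (γ + β) ^ 2 * m) + 3 * Real.log (1 / δ)} :=
  few_misleading_features_general μ K m γ β δ hβ0 hβγ hγ hδ0 hδ1 W hmeas hindep h01 hp
end

section
/- In the generative model with parameters N, K, γ with 0 ≤ γ ≤ 1/5, any classifier f : {0,1}^N → {0,1} that includes exactly k relevant variables (i.e., |V(f) ∩ R| = k, where R is the set of relevant variables) has error probability P(f(X) ≠ Y) at least (1/4)·exp(−5·γ²·k). -/
/-!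
Given `x`, the classifier errs when `Y = !f x`, so the error is `(1/2) ∑ₓ P(x | Y = !f x)`.
Since `f` ignores every variable outside `V(f)`, averaging the law of such a variable over its two
values does not change this sum, and afterwards it is uniform under both labels. The error is
then at least `(1/2) ∑ₓ min (P₀ x) (P₁ x)`, and Cauchy–Schwarz against `∑ₓ max (P₀ x) (P₁ x) ≤ 2`
bounds this by a quarter of the squared Bhattacharyya coefficient of the two product laws, which
factorizes: each of the `k` relevant variables in `V(f)` contributes `2 √((1/2 + γ)(1/2 - γ))`
and the others `1`. Finally `(1 - 4γ²)ᵏ ≥ exp (-5γ²k)` for `γ ≤ 1/5`.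
-/

open Finset Real

theorem sq_sum_sqrt_mul_le_sum_min_mul_sum_add {α : Type*} (s : Finset α) {u v : α → ℝ}
    (hu : ∀ x ∈ s, 0 ≤ u x) (hv : ∀ x ∈ s, 0 ≤ v x) :
    (∑ x ∈ s, √(u x * v x)) ^ 2 ≤ (∑ x ∈ s, min (u x) (v x)) * ∑ x ∈ s, (u x + v x) := by
  have hsplit : ∀ x ∈ s, √(u x * v x) = √(min (u x) (v x)) * √(max (u x) (v x)) := by
    intro x hx
    rw [← sqrt_mul (le_min (hu x hx) (hv x hx)), min_mul_max]
  calc (∑ x ∈ s, √(u x * v x)) ^ 2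
      = (∑ x ∈ s, √(min (u x) (v x)) * √(max (u x) (v x))) ^ 2 := by rw [sum_congr rfl hsplit]
    _ ≤ (∑ x ∈ s, √(min (u x) (v x)) ^ 2) * ∑ x ∈ s, √(max (u x) (v x)) ^ 2 :=
        sum_mul_sq_le_sq_mul_sq _ _ _
    _ = (∑ x ∈ s, min (u x) (v x)) * ∑ x ∈ s, max (u x) (v x) := by
        congr 1 <;> refine sum_congr rfl fun x hx => sq_sqrt ?_
        exacts [le_min (hu x hx) (hv x hx), le_max_of_le_left (hu x hx)]
    _ ≤ (∑ x ∈ s, min (u x) (v x)) * ∑ x ∈ s, (u x + v x) := by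
        gcongr with x hx
        · exact sum_nonneg fun x hx => le_min (hu x hx) (hv x hx)
        · exact max_le (le_add_of_nonneg_right (hv x hx)) (le_add_of_nonneg_left (hu x hx))

section ProductWeights

variable {ι : Type*} [Fintype ι] [DecidableEq ι]

theorem sum_prod_eq_sum_prod_average_of_flip_invariant {β : Type*} (w : ι → Bool → β → ℝ)
    (g : (ι → Bool) → β) (i : ι) (hg : ∀ x, g (Function.update x i (!x i)) = g x) :
    ∑ x : ι → Bool, ∏ j, w j (x j) (g x)
      = ∑ x : ι → Bool, ∏ j,
          if j = i then (w i false (g x) + w i true (g x)) / 2 else w j (x j) (g x) := by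
  set τ : (ι → Bool) → (ι → Bool) := fun x => Function.update x i (!x i)
  have hτ : Function.Involutive τ := fun x => by
    funext j
    by_cases h : j = i
    · subst h; simp [τ]
    · simp [τ, Function.update_of_ne h]
  have hrest :
      ∀ x, ∏ j ∈ univ.erase i, w j (τ x j) (g x) = ∏ j ∈ univ.erase i, w j (x j) (g x) :=
    fun x => prod_congr rfl fun j hj => by
      rw [show τ x j = x j from Function.update_of_ne (ne_of_mem_erase hj) _ _]
  have hswap :
      ∑ x : ι → Bool, ∏ j, w j (τ x j) (g x) = ∑ x : ι → Bool, ∏ j, w j (x j) (g x) := by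
    have h := hτ.bijective.sum_comp fun x => ∏ j, w j (τ x j) (g x)
    simp only [hτ _, show ∀ x, g (τ x) = g x from hg] at h
    exact h.symm
  calc ∑ x : ι → Bool, ∏ j, w j (x j) (g x)
      = ∑ x : ι → Bool, (∏ j, w j (x j) (g x) + ∏ j, w j (τ x j) (g x)) / 2 := by
        rw [← sum_div, sum_add_distrib, hswap]
        ring
    _ = _ := by
        refine sum_congr rfl fun x _ => ?_
        rw [← mul_prod_erase univ (fun j => w j (x j) (g x)) (mem_univ i),
          ← mul_prod_erase univ (fun j => w j (τ x j) (g x)) (mem_univ i), hrest,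
          ← mul_prod_erase univ _ (mem_univ i), if_pos rfl,
          prod_congr rfl fun j hj => if_neg (ne_of_mem_erase hj)]
        have hi : τ x i = !x i := by simp [τ]
        rw [hi]
        cases x i <;> simp only [Bool.not_false, Bool.not_true] <;> ring

theorem sum_prod_eq_sum_prod_half_of_flip_invariant {β : Type*} (w : ι → Bool → β → ℝ)
    (g : (ι → Bool) → β) (T : Finset ι) (hw : ∀ i ∈ T, ∀ y, ∑ b, w i b y = 1)
    (hg : ∀ i ∈ T, ∀ x, g (Function.update x i (!x i)) = g x) :
    ∑ x : ι → Bool, ∏ j, w j (x j) (g x)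
      = ∑ x : ι → Bool, ∏ j, if j ∈ T then 1 / 2 else w j (x j) (g x) := by
  induction T using Finset.induction_on with
  | empty => simp
  | @insert i T hiT ih =>
    rw [ih (fun j hj => hw j (mem_insert_of_mem hj)) (fun j hj => hg j (mem_insert_of_mem hj)),
      sum_prod_eq_sum_prod_average_of_flip_invariant
        (fun j b y => if j ∈ T then 1 / 2 else w j b y) g i (hg i (mem_insert_self i T))]
    refine sum_congr rfl fun x _ => prod_congr rfl fun j _ => ?_
    by_cases hji : j = i
    · subst hji
      have h := hw j (mem_insert_self j T) (g x)
      rw [Fintype.sum_bool] at h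
      simp only [hiT, if_true, if_false, mem_insert_self]
      linarith
    · simp [hji]

theorem sq_prod_sum_sqrt_le_two_mul_sum_prod (w : ι → Bool → Bool → ℝ)
    (hw0 : ∀ j b y, 0 ≤ w j b y) (hw1 : ∀ j y, ∑ b, w j b y = 1) (g : (ι → Bool) → Bool) :
    (∏ j, ∑ b, √(w j b false * w j b true)) ^ 2 ≤ 2 * ∑ x : ι → Bool, ∏ j, w j (x j) (g x) := by
  set u : (ι → Bool) → ℝ := fun x => ∏ j, w j (x j) false
  set v : (ι → Bool) → ℝ := fun x => ∏ j, w j (x j) true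
  have hu : ∀ x ∈ univ, 0 ≤ u x := fun x _ => prod_nonneg fun j _ => hw0 _ _ _
  have hv : ∀ x ∈ univ, 0 ≤ v x := fun x _ => prod_nonneg fun j _ => hw0 _ _ _
  have hmass : ∀ y, ∑ x : ι → Bool, ∏ j, w j (x j) y = 1 := fun y => by
    rw [← Fintype.prod_sum fun j b => w j b y]
    exact prod_eq_one fun j _ => hw1 j y
  have hsqrt : ∏ j, ∑ b, √(w j b false * w j b true) = ∑ x, √(u x * v x) := by
    rw [Fintype.prod_sum]
    refine sum_congr rfl fun x _ => ?_
    rw [← prod_mul_distrib, sqrt_prod _ fun j _ => mul_nonneg (hw0 _ _ _) (hw0 _ _ _)]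
  have hmin : ∀ x, min (u x) (v x) ≤ ∏ j, w j (x j) (g x) := fun x => by
    cases g x
    exacts [min_le_left _ _, min_le_right _ _]
  calc (∏ j, ∑ b, √(w j b false * w j b true)) ^ 2
      ≤ (∑ x, min (u x) (v x)) * ∑ x, (u x + v x) := by
        rw [hsqrt]; exact sq_sum_sqrt_mul_le_sum_min_mul_sum_add _ hu hv
    _ = 2 * ∑ x, min (u x) (v x) := by
        rw [sum_add_distrib, hmass, hmass]; ring
    _ ≤ 2 * ∑ x : ι → Bool, ∏ j, w j (x j) (g x) := by gcongr with x; exact hmin x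

end ProductWeights

section Model

variable {ι : Type*}

/-- `P(x j = b | Y = y)` for a variable that agrees with the label with probability `p j`. -/
def agreeWeight (p : ι → ℝ) (j : ι) (b y : Bool) : ℝ := if b = y then p j else 1 - p j

theorem agreeWeight_nonneg {p : ι → ℝ} (hp : ∀ j, 0 ≤ p j ∧ p j ≤ 1) (j : ι) (b y : Bool) :
    0 ≤ agreeWeight p j b y := by
  unfold agreeWeight; split_ifs <;> linarith [hp j]

theorem sum_agreeWeight (p : ι → ℝ) (j : ι) (y : Bool) : ∑ b, agreeWeight p j b y = 1 := by
  cases y <;> simp [agreeWeight]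

theorem sum_sqrt_agreeWeight_mul (p : ι → ℝ) (j : ι) :
    ∑ b, √(agreeWeight p j b false * agreeWeight p j b true) = √(1 - (2 * p j - 1) ^ 2) := by
  rw [show 1 - (2 * p j - 1) ^ 2 = 4 * (p j * (1 - p j)) by ring, sqrt_mul (by norm_num),
    show (4 : ℝ) = 2 ^ 2 by norm_num, sqrt_sq (by norm_num)]
  simp [agreeWeight, mul_comm]
  ring

theorem ite_half_agreeWeight [DecidableEq ι] (T : Finset ι) (p : ι → ℝ) (j : ι) (b y : Bool) :
    (if j ∈ T then 1 / 2 else agreeWeight p j b y)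
      = agreeWeight (fun j => if j ∈ T then 1 / 2 else p j) j b y := by
  by_cases hj : j ∈ T
  · simp [agreeWeight, hj]; norm_num
  · simp [agreeWeight, hj]

theorem sq_prod_sqrt_le_two_mul_sum_prod_agreeWeight [Fintype ι] [DecidableEq ι] {p : ι → ℝ}
    (hp : ∀ j, 0 ≤ p j ∧ p j ≤ 1) (g : (ι → Bool) → Bool) :
    (∏ j, √(1 - (2 * p j - 1) ^ 2)) ^ 2
      ≤ 2 * ∑ x : ι → Bool, ∏ j, agreeWeight p j (x j) (g x) := by
  simpa only [sum_sqrt_agreeWeight_mul] using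
    sq_prod_sum_sqrt_le_two_mul_sum_prod (agreeWeight p) (agreeWeight_nonneg hp)
      (sum_agreeWeight p) g

theorem sum_ite_ne_mul_eq_half_mul_sum_prod_not [Fintype ι] [DecidableEq ι]
    (w : ι → Bool → Bool → ℝ) (f : (ι → Bool) → Bool) :
    ∑ e : (ι → Bool) × Bool,
        ((1 / 2 : ℝ) * ∏ i, w i (e.1 i) e.2) * (if f e.1 ≠ e.2 then 1 else 0)
      = 1 / 2 * ∑ x : ι → Bool, ∏ i, w i (x i) (!f x) := by
  rw [Fintype.sum_prod_type, mul_sum]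
  refine sum_congr rfl fun x _ => ?_
  cases h : f x <;> simp [h]

theorem prod_sqrt_one_sub_sq_ite_half_eq_pow [Fintype ι] [DecidableEq ι] {γ : ℝ}
    {R : Finset ι} {sign : ι → Bool} {p : ι → ℝ}
    (hp : ∀ i, p i = if i ∈ R then (if sign i then 1 / 2 + γ else 1 / 2 - γ) else 1 / 2)
    (T : Finset ι) :
    ∏ j, √(1 - (2 * (if j ∈ T then 1 / 2 else p j) - 1) ^ 2) = √(1 - 4 * γ ^ 2) ^ #(R \ T) := by
  have hterm : ∀ j, √(1 - (2 * (if j ∈ T then 1 / 2 else p j) - 1) ^ 2)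
      = if j ∈ R \ T then √(1 - 4 * γ ^ 2) else 1 := fun j => by
    simp only [hp j, mem_sdiff]
    split_ifs <;> simp_all <;> ring_nf
  rw [prod_congr rfl fun j _ => hterm j, prod_ite_mem, univ_inter, prod_const]

end Model

theorem exp_neg_five_mul_le_one_sub_four_mul {t : ℝ} (ht0 : 0 ≤ t) (ht : t ≤ 1 / 20) :
    exp (-(5 * t)) ≤ 1 - 4 * t := by
  have hpos : 0 < 1 + 5 * t := by linarith
  calc exp (-(5 * t)) = (exp (5 * t))⁻¹ := exp_neg _
    _ ≤ (1 + 5 * t)⁻¹ := inv_anti₀ hpos (by linarith [add_one_le_exp (5 * t)])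
    _ ≤ 1 - 4 * t := by rw [inv_le_iff_one_le_mul₀ hpos]; nlinarith

theorem classifier_error_lower_bound_general
    (N k : ℕ) (γ : ℝ) (hγ0 : 0 ≤ γ) (hγ : γ ≤ 1 / 5)
    (R : Finset (Fin N))
    (sign : Fin N → Bool)
    (p : Fin N → ℝ)
    (hp : ∀ i, p i = if i ∈ R then (if sign i then 1 / 2 + γ else 1 / 2 - γ) else 1 / 2)
    (f : (Fin N → Bool) → Bool)
    (hk : (Finset.univ.filter (fun i : Fin N =>
        i ∈ R ∧ ∃ v : Fin N → Bool,
          f v ≠ f (Function.update v i (!(v i))))).card = k) :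
    (1 / 4 : ℝ) * Real.exp (-5 * γ ^ 2 * k)
      ≤ ∑ e : (Fin N → Bool) × Bool,
          ((1 / 2 : ℝ) * ∏ i, (if e.1 i = e.2 then p i else 1 - p i)) *
            (if f e.1 ≠ e.2 then 1 else 0) := by
  classical
  set T := univ.filter fun j => ∀ v : Fin N → Bool, f v = f (Function.update v j (!v j))
  set p' := fun j => if j ∈ T then 1 / 2 else p j
  have hp' : ∀ j, 0 ≤ p' j ∧ p' j ≤ 1 := fun j => by
    simp only [p', hp j]; split_ifs <;> constructor <;> linarith
  have hsymm : ∑ x : Fin N → Bool, ∏ j, agreeWeight p j (x j) (!f x)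
      = ∑ x : Fin N → Bool, ∏ j, agreeWeight p' j (x j) (!f x) := by
    rw [sum_prod_eq_sum_prod_half_of_flip_invariant (agreeWeight p) (fun x => !f x) T
      (fun j _ => sum_agreeWeight p j) (fun j hj x => by rw [← (mem_filter.mp hj).2 x])]
    simp only [ite_half_agreeWeight]
    rfl
  have hRT : #(R \ T) = k := by
    rw [← hk]; congr 1; ext j; simp [T]
  have hexp : exp (-5 * γ ^ 2 * k) ≤ (1 - 4 * γ ^ 2) ^ k := by
    rw [show -5 * γ ^ 2 * k = k * -(5 * γ ^ 2) by ring, exp_nat_mul]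
    exact pow_le_pow_left₀ (exp_pos _).le
      (exp_neg_five_mul_le_one_sub_four_mul (sq_nonneg γ) (by nlinarith)) k
  calc (1 / 4 : ℝ) * exp (-5 * γ ^ 2 * k)
      ≤ 1 / 4 * (√(1 - 4 * γ ^ 2) ^ k) ^ 2 := by
        rw [← pow_mul, mul_comm k, pow_mul, sq_sqrt (by nlinarith)]; gcongr
    _ ≤ 1 / 4 * (2 * ∑ x : Fin N → Bool, ∏ j, agreeWeight p' j (x j) (!f x)) := by
        rw [← hRT, ← prod_sqrt_one_sub_sq_ite_half_eq_pow hp T]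
        gcongr
        exact sq_prod_sqrt_le_two_mul_sum_prod_agreeWeight hp' _
    _ = 1 / 2 * ∑ x : Fin N → Bool, ∏ j, agreeWeight p j (x j) (!f x) := by rw [hsymm]; ring
    _ = _ := (sum_ite_ne_mul_eq_half_mul_sum_prod_not (agreeWeight p) f).symm

/-- **Lemma 8.** Generative model with parameters `N, K, γ` (`0 ≤ γ ≤ 1/5`): the label `Y` is
uniform on `{0,1}`, and conditioned on `Y` the `N` binary variables are independent, variable `i`
agreeing with `Y` with probability `p i`, which is `1/2 + γ` or `1/2 − γ` for the `K` relevant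
variables (the set `R`) and `1/2` for the others.  Hence the probability of an example
`e = (x, y)` is `(1/2)·∏ i, (if x i = y then p i else 1 − p i)`.  Any classifier
`f : {0,1}^N → {0,1}` that includes exactly `k` relevant variables (a variable is included if
flipping it can change `f`'s output) has error probability at least `(1/4)·exp(−5·γ²·k)`. -/
theorem classifier_error_lower_bound
    (N K k : ℕ) (γ : ℝ) (hγ0 : 0 ≤ γ) (hγ : γ ≤ 1 / 5)
    (R : Finset (Fin N)) (hR : R.card = K)
    (sign : Fin N → Bool)
    (p : Fin N → ℝ)
    (hp : ∀ i, p i = if i ∈ R then (if sign i then 1 / 2 + γ else 1 / 2 - γ) else 1 / 2)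
    (f : (Fin N → Bool) → Bool)
    (hk : (Finset.univ.filter (fun i : Fin N =>
        i ∈ R ∧ ∃ v : Fin N → Bool,
          f v ≠ f (Function.update v i (!(v i))))).card = k) :
    (1 / 4 : ℝ) * Real.exp (-5 * γ ^ 2 * k)
      ≤ ∑ e : (Fin N → Bool) × Bool,
          ((1 / 2 : ℝ) * ∏ i, (if e.1 i = e.2 then p i else 1 - p i)) *
            (if f e.1 ≠ e.2 then 1 else 0) :=
  classifier_error_lower_bound_general N k γ hγ0 hγ R sign p hp f hk
end

section
/- Consider the generative model in which the set R of K relevant variables is chosen uniformly at random among the N variables, each relevant variable agrees with the class label with probability 1/2 + γ (0 < γ < 1/2), and each other variable agrees with the label with probability 1/2, all variables being conditionally independent given the label. For any two variables x_i and x_j and any realized training set S of m examples: P(x_i ∈ R | S) > P(x_j ∈ R | S) if and only if the empirical edge of x_i in S is greater than the empirical edge of x_j in S; and P(x_i ∈ R | S) = P(x_j ∈ R | S) if and only if their empirical edges in S are equal. -/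
/-!
Given `S`, the posterior weight of a candidate relevant set `r` factors as
`c #r * ∏ x ∈ r, g (eₓ)`, where `eₓ` counts the examples on which `x` agrees with the label and
`g e = (1/2 + γ)^e (1/2 - γ)^(m - e)` is strictly increasing in `e`. Sets containing both or
neither of `i`, `j` contribute equally to the numerators of `P(xᵢ ∈ R | S)` and `P(xⱼ ∈ R | S)`;
the remaining ones are `insert i s` and `insert j s` for `s` avoiding both, so the difference of
the numerators is `(g eᵢ - g eⱼ)` times a positive sum.
-/
open Finset

lemma prod_ite_const_eq_pow {α M : Type*} [CommMonoid M] (s : Finset α) (P : α → Prop)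
    [DecidablePred P] (a b : M) :
    ∏ x ∈ s, (if P x then a else b) = a ^ #{x ∈ s | P x} * b ^ (#s - #{x ∈ s | P x}) := by
  rw [prod_ite, prod_const, prod_const, ← card_filter_add_card_filter_not (s := s) P,
    Nat.add_sub_cancel_left]

lemma prod_ite_mem_univ {α M : Type*} [Fintype α] [DecidableEq α] [CommMonoid M]
    (r : Finset α) (f : α → M) (b : M) :
    ∏ x, (if x ∈ r then f x else b) = (∏ x ∈ r, f x) * b ^ (Fintype.card α - #r) := by
  rw [prod_ite, prod_const, filter_mem_eq_inter, univ_inter, ← card_compl, filter_not,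
    filter_mem_eq_inter, univ_inter, compl_eq_univ_sdiff]

lemma pow_mul_pow_sub_strictMonoOn {p q : ℝ} (hq : 0 < q) (hqp : q < p) (m : ℕ) :
    StrictMonoOn (fun n => p ^ n * q ^ (m - n)) (Set.Iic m) := by
  intro a _ b (hb : b ≤ m) hab
  calc p ^ a * q ^ (m - a) = p ^ a * q ^ (m - b) * q ^ (b - a) := by
        rw [mul_assoc, ← pow_add]; congr 2; omega
    _ < p ^ a * q ^ (m - b) * p ^ (b - a) := by
        have : 0 < p ^ a * q ^ (m - b) := by have := hq.trans hqp; positivity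
        exact mul_lt_mul_of_pos_left (pow_lt_pow_left₀ hqp hq.le (by omega)) this
    _ = p ^ b * q ^ (m - b) := by
        rw [mul_right_comm, ← pow_add, Nat.add_sub_cancel' hab.le]

section SubsetWeights

variable {ι : Type*} (c : ℕ → ℝ) (g : ι → ℝ)

lemma sum_weight_pos {A : Finset (Finset ι)} (hc : ∀ k, 0 ≤ c k) (hg : ∀ x, 0 < g x)
    {s : Finset ι} (hs : s ∈ A) (hcs : 0 < c #s) : 0 < ∑ r ∈ A, c #r * ∏ x ∈ r, g x :=
  sum_pos' (fun _ _ => mul_nonneg (hc _) (prod_nonneg fun x _ => (hg x).le))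
    ⟨s, hs, mul_pos hcs (prod_pos fun x _ => hg x)⟩

variable [Fintype ι]

lemma sum_univ_weight_pos (hc : ∀ k, 0 ≤ c k) (hg : ∀ x, 0 < g x) {K : ℕ}
    (hK : K ≤ Fintype.card ι) (hcK : 0 < c K) : 0 < ∑ r, c #r * ∏ x ∈ r, g x := by
  obtain ⟨s, -, hs⟩ := exists_subset_card_eq (s := (univ : Finset ι)) (by simpa using hK)
  exact sum_weight_pos c g hc hg (mem_univ s) (hs ▸ hcK)

variable [DecidableEq ι]

lemma sum_filter_notMem_notMem_weight_pos (hc : ∀ k, 0 ≤ c k) (hg : ∀ x, 0 < g x)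
    {i j : ι} (hij : i ≠ j) {K : ℕ} (hK0 : 0 < K) (hK : K < Fintype.card ι) (hcK : 0 < c K) :
    0 < ∑ s with i ∉ s ∧ j ∉ s, c (#s + 1) * ∏ x ∈ s, g x := by
  obtain ⟨s, hsub, hs⟩ := exists_subset_card_eq (s := ({i, j}ᶜ : Finset ι)) (n := K - 1)
    (by rw [card_compl, card_pair hij]; omega)
  refine sum_weight_pos (c ·.succ) g (fun _ => hc _) hg (s := s) ?_ ?_
  · simpa [insert_subset_iff] using subset_compl_comm.mp hsub
  · simp only [hs, Nat.succ_eq_add_one, Nat.sub_add_cancel hK0, hcK]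

lemma sum_filter_mem_notMem_eq_sum_insert {M : Type*} [AddCommMonoid M] {i j : ι} (hij : i ≠ j)
    (F : Finset ι → M) :
    ∑ r with i ∈ r ∧ j ∉ r, F r = ∑ s with i ∉ s ∧ j ∉ s, F (insert i s) := by
  symm
  apply sum_nbij' (insert i) (·.erase i) <;> intro r hr <;> simp_all [Ne.symm hij]

lemma sum_filter_mem_sub_sum_filter_mem {i j : ι} (hij : i ≠ j) :
    ∑ r with i ∈ r, c #r * ∏ x ∈ r, g x - ∑ r with j ∈ r, c #r * ∏ x ∈ r, g x =
      (g i - g j) * ∑ s with i ∉ s ∧ j ∉ s, c (#s + 1) * ∏ x ∈ s, g x := by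
  have split (i j : ι) (hij : i ≠ j) : ∑ r with i ∈ r, c #r * ∏ x ∈ r, g x =
      ∑ r with i ∈ r ∧ j ∈ r, c #r * ∏ x ∈ r, g x +
        g i * ∑ s with i ∉ s ∧ j ∉ s, c (#s + 1) * ∏ x ∈ s, g x := by
    rw [← sum_filter_add_sum_filter_not _ (j ∈ ·), filter_filter, filter_filter,
      sum_filter_mem_notMem_eq_sum_insert hij, mul_sum]
    congr 1
    refine sum_congr rfl fun s hs => ?_
    rw [mem_filter] at hs
    rw [card_insert_of_notMem hs.2.1, prod_insert hs.2.1]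
    ring
  rw [split i j hij, split j i hij.symm]
  simp only [and_comm (a := j ∈ _), and_comm (a := j ∉ _)]
  ring

end SubsetWeights

lemma prod_likelihood_eq {N m : ℕ} (S : Fin m → (Fin N → Bool) × Bool) (γ : ℝ)
    (r : Finset (Fin N)) :
    ∏ t, ((1 / 2 : ℝ) * ∏ i, (if (S t).1 i = (S t).2
        then (if i ∈ r then 1 / 2 + γ else 1 / 2)
        else (if i ∈ r then 1 / 2 - γ else 1 / 2))) =
      (1 / 2) ^ m * ((1 / 2) ^ m) ^ (N - #r) *
        ∏ x ∈ r, (1 / 2 + γ) ^ #{t | (S t).1 x = (S t).2} *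
          (1 / 2 - γ) ^ (m - #{t | (S t).1 x = (S t).2}) := by
  have hfactor (x : Fin N) : ∏ t, (if (S t).1 x = (S t).2
      then (if x ∈ r then 1 / 2 + γ else 1 / 2)
      else (if x ∈ r then 1 / 2 - γ else 1 / 2)) =
      if x ∈ r then (1 / 2 + γ) ^ #{t | (S t).1 x = (S t).2} *
          (1 / 2 - γ) ^ (m - #{t | (S t).1 x = (S t).2})
        else (1 / 2 : ℝ) ^ m := by
    split_ifs with hx
    · rw [prod_ite_const_eq_pow, card_univ, Fintype.card_fin]
    · simp only [ite_self, prod_const, card_univ, Fintype.card_fin]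
  rw [prod_mul_distrib, prod_const, card_univ, Fintype.card_fin, prod_comm,
    prod_congr rfl fun x _ => hfactor x, prod_ite_mem_univ, Fintype.card_fin]
  ring

-- The prior of a `k`-set times the likelihood of the labels and of the `N - k` irrelevant
-- variables on `m` examples.
noncomputable def subsetWeightCoeff (N K m k : ℕ) : ℝ :=
  (if k = K then (1 : ℝ) / N.choose K else 0) * ((1 / 2) ^ m * ((1 / 2) ^ m) ^ (N - k))

lemma subsetWeightCoeff_nonneg (N K m k : ℕ) : 0 ≤ subsetWeightCoeff N K m k := by
  unfold subsetWeightCoeff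
  split_ifs <;> positivity

lemma subsetWeightCoeff_self_pos {N K : ℕ} (hKN : K ≤ N) (m : ℕ) :
    0 < subsetWeightCoeff N K m K := by
  have : (0 : ℝ) < N.choose K := mod_cast Nat.choose_pos hKN
  rw [subsetWeightCoeff, if_pos rfl]
  positivity

/-- **Lemma 9 (monotonicity of relevance in empirical edge).** Generative model: the set `R` of
`K` relevant variables is uniformly random among the `K`-subsets of the `N` variables
(`0 < K < N`); each example has a uniform label and, conditionally on the label and `R`, the
variables are independent, a relevant variable agreeing with the label with probability
`1/2 + γ` (`0 < γ < 1/2`) and any other variable with probability `1/2`.  For a realized training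
set `S` of `m` examples, `w r` is the joint probability of choosing `r` as the relevant set and
observing `S`; `condP i = P(xᵢ ∈ R | S)` is the corresponding conditional probability, and
`edge i` counts the examples on which variable `i` agrees with the label (which determines the
empirical edge).  Then `P(xᵢ ∈ R | S) > P(xⱼ ∈ R | S)` iff the empirical edge of `xᵢ` exceeds
that of `xⱼ`, and the conditional probabilities are equal iff the empirical edges are equal. -/
theorem relevance_monotone_in_empirical_edge
    (N K m : ℕ) (hK0 : 0 < K) (hKN : K < N)
    (γ : ℝ) (hγ0 : 0 < γ) (hγ : γ < 1 / 2)
    (S : Fin m → (Fin N → Bool) × Bool)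
    (w : Finset (Fin N) → ℝ)
    (hw : ∀ r, w r = (if r.card = K then (1 : ℝ) / (N.choose K) else 0) *
        ∏ t, ((1 / 2 : ℝ) * ∏ i, (if (S t).1 i = (S t).2
            then (if i ∈ r then 1 / 2 + γ else 1 / 2)
            else (if i ∈ r then 1 / 2 - γ else 1 / 2))))
    (condP : Fin N → ℝ)
    (hcond : ∀ i, condP i =
      (∑ r : Finset (Fin N), if i ∈ r then w r else 0) / (∑ r : Finset (Fin N), w r))
    (edge : Fin N → ℕ)
    (hedge : ∀ i, edge i = (Finset.univ.filter (fun t : Fin m => (S t).1 i = (S t).2)).card)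
    (i j : Fin N) :
    (condP j < condP i ↔ edge j < edge i) ∧ (condP i = condP j ↔ edge i = edge j) := by
  rcases eq_or_ne i j with rfl | hij
  · simp
  set g : ℕ → ℝ := fun n => (1 / 2 + γ) ^ n * (1 / 2 - γ) ^ (m - n)
  set c := subsetWeightCoeff N K m
  obtain rfl : w = fun r => c #r * ∏ x ∈ r, g (edge x) := by
    ext r
    simp only [hw, prod_likelihood_eq, hedge, c, g, subsetWeightCoeff]
    ring
  have hg (x : Fin N) : 0 < g (edge x) := by
    have : 0 < 1 / 2 - γ := by linarith
    positivity
  have hc := subsetWeightCoeff_nonneg N K m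
  have hcK := subsetWeightCoeff_self_pos hKN.le m
  have hD := sum_univ_weight_pos c _ hc hg (by simpa using hKN.le) hcK
  have hT := sum_filter_notMem_notMem_weight_pos c _ hc hg hij hK0 (by simpa using hKN) hcK
  have hdiff : condP i - condP j = (g (edge i) - g (edge j)) *
      ((∑ s with i ∉ s ∧ j ∉ s, c (#s + 1) * ∏ x ∈ s, g (edge x)) /
        ∑ r, c #r * ∏ x ∈ r, g (edge x)) := by
    rw [hcond, hcond, ← sum_filter, ← sum_filter, div_sub_div_same,
      sum_filter_mem_sub_sum_filter_mem c _ hij, mul_div_assoc]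
  have hgmono := pow_mul_pow_sub_strictMonoOn (by linarith : 0 < 1 / 2 - γ)
    (by linarith : 1 / 2 - γ < 1 / 2 + γ) m
  have hedge_le (x : Fin N) : edge x ∈ Set.Iic m := by
    simpa [hedge] using card_filter_le univ fun t : Fin m => (S t).1 x = (S t).2
  constructor
  · rw [← sub_pos, hdiff, mul_pos_iff_of_pos_right (div_pos hT hD), sub_pos,
      hgmono.lt_iff_lt (hedge_le j) (hedge_le i)]
  · rw [← sub_eq_zero, hdiff, mul_eq_zero, or_iff_left (div_pos hT hD).ne', sub_eq_zero,
      hgmono.injOn.eq_iff (hedge_le i) (hedge_le j)]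
end
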